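/- For all u, s ∈ ℝ one has u·s ≤ (1/2)·(e^{|u|} − 1 − |u|) + (|s| + 1/2)·log(2|s| + 1) − |s|; that is, u·s ≤ (1/2)·P(u) + Q(s). -/
import Mathlib

/-- `P(t) = e^{|t|} - 1 - |t|`. -/
noncomputable def P (t : ℝ) : ℝ := Real.exp |t| - 1 - |t|

/-- `Q(s) = (|s| + 1/2)·log(2|s| + 1) - |s|`. -/
noncomputable def Q (s : ℝ) : ℝ := (|s| + 1 / 2) * Real.log (2 * |s| + 1) - |s|

lemma young_key (a c : ℝ) (hc : 0 ≤ c) :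
    a * c ≤ (Real.exp a - 1 - a) + ((1 + c) * Real.log (1 + c) - c) := by
  have h1c : (0:ℝ) < 1 + c := by linarith
  set m := Real.log (1 + c) with hm
  have hexp : Real.exp m = 1 + c := Real.exp_log h1c
  have h1 : a - m + 1 ≤ Real.exp (a - m) := Real.add_one_le_exp _
  have h2 : (1 + c) * (a - m + 1) ≤ (1 + c) * Real.exp (a - m) := by
    exact mul_le_mul_of_nonneg_left h1 (le_of_lt h1c)
  have h3 : (1 + c) * Real.exp (a - m) = Real.exp a := by
    rw [← hexp, ← Real.exp_add]; ring_nf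
  nlinarith [h2, h3]

/-- For all `u, s ∈ ℝ`: `u·s ≤ (1/2)·P(u) + Q(s)`. -/
theorem young_type_inequality_half (u s : ℝ) : u * s ≤ (1 / 2) * P u + Q s := by
  have h1 : u * s ≤ |u| * |s| := by
    calc u * s ≤ |u * s| := le_abs_self _
    _ = |u| * |s| := abs_mul u s
  have key := young_key |u| (2 * |s|) (by positivity)
  have hQ : Q s = (1/2) * ((1 + 2 * |s|) * Real.log (1 + 2 * |s|) - 2 * |s|) := by
    unfold Q; ring_nf
  unfold P
  rw [hQ]
  nlinarith [key]
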